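/- arXiv:2005.02340 — 2 statements merged into one kernel-verified Lean document; each statement's English description precedes it below -/
import Mathlib

section
/- For every integer n ≥ 1 and all reals a, b, c > 0, the system of equations a/(1-xᵢ) - b/xᵢ = ∑_{j≠i} c/(xᵢ - xⱼ), 1 ≤ i ≤ n, has a solution (x₁,...,xₙ) with 0 < x₁ < x₂ < ... < xₙ < 1. -/
/-!
Stieltjes' electrostatic argument. The weight
`W(x) = ∏ⱼ xⱼ ^ b (1 - xⱼ) ^ a · ∏_{j ≠ k} |xⱼ - xₖ| ^ (c / 2)` is continuous on the compact set of
monotone points of `[0, 1]ⁿ` and vanishes wherever some `xⱼ ∈ {0, 1}` or two coordinates coincide,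
so it attains a positive maximum at a strictly increasing point of `(0, 1)ⁿ`. That point is a local
maximum of `W` on all of `ℝⁿ`, and the vanishing of the logarithmic derivative of `W` in the
coordinate `xᵢ` is exactly the `i`-th equation.
-/

open Finset Filter Topology Function

theorem prod_prod_erase_eq_sq_mul_of_symm {ι M : Type*} [Fintype ι] [DecidableEq ι] [CommMonoid M]
    (f : ι → ι → M) (hf : ∀ j k, f j k = f k j) (i : ι) :
    ∏ j, ∏ k ∈ univ.erase j, f j k =
      (∏ k ∈ univ.erase i, f i k) ^ 2 *
        ∏ j ∈ univ.erase i, ∏ k ∈ (univ.erase j).erase i, f j k := by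
  have hsplit : ∀ j ∈ univ.erase i,
      ∏ k ∈ univ.erase j, f j k = f i j * ∏ k ∈ (univ.erase j).erase i, f j k := fun j hj => by
    rw [← mul_prod_erase _ _ (mem_erase.2 ⟨(ne_of_mem_erase hj).symm, mem_univ i⟩), hf]
  rw [← mul_prod_erase univ _ (mem_univ i), prod_congr rfl hsplit, prod_mul_distrib, sq, mul_assoc]

theorem isOpen_setOf_strictMono {ι α : Type*} [Finite ι] [Preorder ι] [LinearOrder α]
    [TopologicalSpace α] [OrderClosedTopology α] : IsOpen {x : ι → α | StrictMono x} := by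
  simp only [StrictMono, Set.ofPred_forall]
  exact isOpen_iInter_of_finite fun p => isOpen_iInter_of_finite fun q =>
    isOpen_iInter_of_finite fun _ => isOpen_lt (continuous_apply p) (continuous_apply q)

theorem isCompact_Icc_inter_setOf_monotone {ι : Type*} [Preorder ι] (l u : ι → ℝ) :
    IsCompact (Set.Icc l u ∩ {x | Monotone x}) := by
  refine isCompact_Icc.inter_right ?_
  simp only [Monotone, Set.ofPred_forall]
  exact isClosed_iInter fun p => isClosed_iInter fun q =>
    isClosed_iInter fun _ => isClosed_le (continuous_apply p) (continuous_apply q)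

theorem exists_strictMono_mem_Ioo (n : ℕ) :
    ∃ x : Fin n → ℝ, (∀ i, 0 < x i ∧ x i < 1) ∧ StrictMono x := by
  refine ⟨fun i => ((i : ℕ) + 1) / (n + 1), fun i => ⟨by positivity, ?_⟩, fun p q hpq => ?_⟩
  · rw [div_lt_one (by positivity)]
    exact_mod_cast Nat.succ_lt_succ i.isLt
  · dsimp only
    gcongr
    exact_mod_cast hpq

theorem div_one_sub_sub_div_eq_sum_of_isLocalMax {ι : Type*} {a b c t₀ : ℝ} {s : Finset ι}
    {y : ι → ℝ} (h0 : 0 < t₀) (h1 : t₀ < 1) (hy : ∀ k ∈ s, t₀ ≠ y k)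
    (hmax : IsLocalMax (fun t => t ^ b * (1 - t) ^ a * ∏ k ∈ s, |t - y k| ^ c) t₀) :
    a / (1 - t₀) - b / t₀ = ∑ k ∈ s, c / (t₀ - y k) := by
  set L : ℝ → ℝ := fun t => b * Real.log t + a * Real.log (1 - t) + c * ∑ k ∈ s, Real.log (t - y k)
  have hexp : ∀ᶠ t in 𝓝 t₀,
      t ^ b * (1 - t) ^ a * ∏ k ∈ s, |t - y k| ^ c = Real.exp (L t) := by
    have hne : ∀ᶠ t in 𝓝 t₀, ∀ k ∈ s, t ≠ y k :=
      (eventually_all_finset s).2 fun k hk => eventually_ne_nhds (hy k hk)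
    filter_upwards [eventually_gt_nhds h0, eventually_lt_nhds h1, hne] with t ht0 ht1 htne
    rw [Real.exp_add, Real.exp_add, mul_sum, Real.exp_sum,
      Real.rpow_def_of_pos ht0, Real.rpow_def_of_pos (sub_pos.2 ht1)]
    congr 1
    · ring_nf
    · refine prod_congr rfl fun k hk => ?_
      rw [Real.rpow_def_of_pos (abs_pos.2 (sub_ne_zero.2 (htne k hk))), Real.log_abs, mul_comm]
  have hLmax : IsLocalMax L t₀ := by
    filter_upwards [hmax, hexp] with t ht hLt
    rwa [hLt, hexp.self_of_nhds, Real.exp_le_exp] at ht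
  have hL : HasDerivAt L
      (b * t₀⁻¹ + a * (-1 / (1 - t₀)) + c * ∑ k ∈ s, 1 / (t₀ - y k)) t₀ :=
    (((Real.hasDerivAt_log h0.ne').const_mul b).add
      ((((hasDerivAt_id' t₀).const_sub 1).log (sub_pos.2 h1).ne').const_mul a)).add
      ((HasDerivAt.fun_sum fun k hk =>
        ((hasDerivAt_id' t₀).sub_const (y k)).log (sub_ne_zero.2 (hy k hk))).const_mul c)
  have hcrit := hLmax.hasDerivAt_eq_zero hL
  simp only [mul_sum, mul_one_div] at hcrit
  linear_combination -hcrit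

noncomputable def stieltjesWeight {ι : Type*} [Fintype ι] [DecidableEq ι] (a b c : ℝ)
    (x : ι → ℝ) : ℝ :=
  (∏ j, x j ^ b * (1 - x j) ^ a) * ∏ j, ∏ k ∈ univ.erase j, |x j - x k| ^ (c / 2)

section StieltjesWeight

variable {ι : Type*} [Fintype ι] [DecidableEq ι] {a b c : ℝ}

theorem continuous_stieltjesWeight (ha : 0 ≤ a) (hb : 0 ≤ b) (hc : 0 ≤ c) :
    Continuous (stieltjesWeight (ι := ι) a b c) := by
  have hc2 : 0 ≤ c / 2 := by positivity
  unfold stieltjesWeight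
  fun_prop (disch := simp [*])

theorem stieltjesWeight_pos {x : ι → ℝ} (hx : ∀ j, 0 < x j ∧ x j < 1) (hinj : Injective x) :
    0 < stieltjesWeight a b c x := by
  refine mul_pos (prod_pos fun j _ => ?_) (prod_pos fun j _ => prod_pos fun k hk => ?_)
  · exact mul_pos (Real.rpow_pos_of_pos (hx j).1 _) (Real.rpow_pos_of_pos (by linarith [hx j]) _)
  · exact Real.rpow_pos_of_pos (abs_pos.2 (sub_ne_zero.2 (hinj.ne (ne_of_mem_erase hk).symm))) _

theorem ne_zero_ne_one_injective_of_stieltjesWeight_ne_zero (ha : a ≠ 0) (hb : b ≠ 0)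
    (hc : c ≠ 0) {x : ι → ℝ} (hx : stieltjesWeight a b c x ≠ 0) :
    (∀ j, x j ≠ 0 ∧ x j ≠ 1) ∧ Injective x := by
  obtain ⟨hP, hV⟩ := mul_ne_zero_iff.1 hx
  refine ⟨fun j => ?_, fun j k hjk => ?_⟩
  · obtain ⟨h0, h1⟩ := mul_ne_zero_iff.1 (prod_ne_zero_iff.1 hP j (mem_univ j))
    refine ⟨fun hj => h0 (by rw [hj, Real.zero_rpow hb]), fun hj => h1 ?_⟩
    rw [hj, sub_self, Real.zero_rpow ha]
  · by_contra hne
    refine prod_ne_zero_iff.1 (prod_ne_zero_iff.1 hV j (mem_univ j)) k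
      (mem_erase.2 ⟨Ne.symm hne, mem_univ k⟩) ?_
    rw [hjk, sub_self, abs_zero, Real.zero_rpow (div_ne_zero hc two_ne_zero)]

theorem exists_stieltjesWeight_update_eq_mul (x : ι → ℝ) (i : ι) : ∃ R, ∀ t,
    stieltjesWeight a b c (update x i t) =
      (t ^ b * (1 - t) ^ a * ∏ k ∈ univ.erase i, |t - x k| ^ c) * R := by
  refine ⟨(∏ j ∈ univ.erase i, x j ^ b * (1 - x j) ^ a) *
    ∏ j ∈ univ.erase i, ∏ k ∈ (univ.erase j).erase i, |x j - x k| ^ (c / 2), fun t => ?_⟩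
  have hupd : ∀ j ∈ univ.erase i, update x i t j = x j :=
    fun j hj => update_of_ne (ne_of_mem_erase hj) _ _
  have hsq : (∏ k ∈ univ.erase i, |t - x k| ^ (c / 2)) ^ 2 = ∏ k ∈ univ.erase i, |t - x k| ^ c := by
    rw [← prod_pow]
    refine prod_congr rfl fun k _ => ?_
    rw [← Real.rpow_mul_natCast (abs_nonneg _)]
    norm_num
  unfold stieltjesWeight
  rw [← mul_prod_erase univ _ (mem_univ i),
    prod_prod_erase_eq_sq_mul_of_symm _ (fun j k => by rw [abs_sub_comm]) i, ← hsq]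
  have hP : ∏ j ∈ univ.erase i, update x i t j ^ b * (1 - update x i t j) ^ a =
      ∏ j ∈ univ.erase i, x j ^ b * (1 - x j) ^ a := prod_congr rfl fun j hj => by rw [hupd j hj]
  have hVi : ∏ k ∈ univ.erase i, |t - update x i t k| ^ (c / 2) =
      ∏ k ∈ univ.erase i, |t - x k| ^ (c / 2) := prod_congr rfl fun k hk => by rw [hupd k hk]
  have hV : ∏ j ∈ univ.erase i, ∏ k ∈ (univ.erase j).erase i,
        |update x i t j - update x i t k| ^ (c / 2) =
      ∏ j ∈ univ.erase i, ∏ k ∈ (univ.erase j).erase i, |x j - x k| ^ (c / 2) :=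
    prod_congr rfl fun j hj => prod_congr rfl fun k hk => by
      rw [hupd j hj, hupd k (mem_erase.2 ⟨ne_of_mem_erase hk, mem_univ k⟩)]
  simp only [update_self]
  rw [hP, hVi, hV]
  ring

end StieltjesWeight

theorem div_one_sub_sub_div_eq_sum_of_isLocalMax_stieltjesWeight {ι : Type*} [Fintype ι]
    [DecidableEq ι] {a b c : ℝ} {z : ι → ℝ} (hz : ∀ i, 0 < z i ∧ z i < 1) (hzinj : Injective z)
    (hmax : IsLocalMax (stieltjesWeight a b c) z) (i : ι) :
    a / (1 - z i) - b / z i = ∑ j ∈ univ.erase i, c / (z i - z j) := by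
  obtain ⟨R, hR⟩ := exists_stieltjesWeight_update_eq_mul (a := a) (b := b) (c := c) z i
  have hne : ∀ k ∈ univ.erase i, z i ≠ z k := fun k hk => hzinj.ne (ne_of_mem_erase hk).symm
  have hg : 0 < z i ^ b * (1 - z i) ^ a * ∏ k ∈ univ.erase i, |z i - z k| ^ c :=
    mul_pos
      (mul_pos (Real.rpow_pos_of_pos (hz i).1 _) (Real.rpow_pos_of_pos (sub_pos.2 (hz i).2) _))
      (prod_pos fun k hk => Real.rpow_pos_of_pos (abs_pos.2 (sub_ne_zero.2 (hne k hk))) _)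
  have hRpos : 0 < R := pos_of_mul_pos_right
    (by rw [← hR, update_eq_self]; exact stieltjesWeight_pos hz hzinj) hg.le
  have hline : IsLocalMax (fun t => stieltjesWeight a b c (update z i t)) (z i) :=
    (update_eq_self i z).symm ▸ hmax |>.comp_continuous
      (continuous_const.update i continuous_id).continuousAt
  refine div_one_sub_sub_div_eq_sum_of_isLocalMax (hz i).1 (hz i).2 hne ?_
  filter_upwards [hline] with t ht
  rw [hR, hR] at ht
  exact le_of_mul_le_mul_right ht hRpos

theorem exists_strictMono_isLocalMax_stieltjesWeight (n : ℕ) {a b c : ℝ} (ha : 0 < a)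
    (hb : 0 < b) (hc : 0 < c) : ∃ z : Fin n → ℝ, (∀ i, 0 < z i ∧ z i < 1) ∧ StrictMono z ∧
      IsLocalMax (stieltjesWeight a b c) z := by
  obtain ⟨x₀, hx₀, hx₀mono⟩ := exists_strictMono_mem_Ioo n
  have hx₀K : x₀ ∈ Set.Icc 0 1 ∩ {x | Monotone x} :=
    ⟨⟨fun i => (hx₀ i).1.le, fun i => (hx₀ i).2.le⟩, hx₀mono.monotone⟩
  obtain ⟨z, ⟨hz01, hzmono⟩, hzmax⟩ := (isCompact_Icc_inter_setOf_monotone 0 1).exists_isMaxOn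
    ⟨x₀, hx₀K⟩ (continuous_stieltjesWeight ha.le hb.le hc.le).continuousOn
  have hWz : 0 < stieltjesWeight a b c z :=
    (stieltjesWeight_pos hx₀ hx₀mono.injective).trans_le (hzmax hx₀K)
  obtain ⟨hzne, hzinj⟩ :=
    ne_zero_ne_one_injective_of_stieltjesWeight_ne_zero ha.ne' hb.ne' hc.ne' hWz.ne'
  have hz : ∀ i, 0 < z i ∧ z i < 1 := fun i =>
    ⟨(hz01.1 i).lt_of_ne (hzne i).1.symm, (hz01.2 i).lt_of_ne (hzne i).2⟩
  have hzsm : StrictMono z := hzmono.strictMono_of_injective hzinj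
  refine ⟨z, hz, hzsm, ?_⟩
  have hU : IsOpen (Set.univ.pi (fun _ => Set.Ioo 0 1) ∩ {x : Fin n → ℝ | StrictMono x}) :=
    (isOpen_set_pi Set.finite_univ fun _ _ => isOpen_Ioo).inter isOpen_setOf_strictMono
  filter_upwards [hU.mem_nhds ⟨fun i _ => hz i, hzsm⟩] with x ⟨hx, hxmono⟩
  exact hzmax ⟨⟨fun i => (hx i trivial).1.le, fun i => (hx i trivial).2.le⟩, hxmono.monotone⟩

theorem stmt_14_general (n : ℕ) (a b c : ℝ) (ha : 0 < a) (hb : 0 < b) (hc : 0 < c) :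
    ∃ x : Fin n → ℝ, (∀ i, 0 < x i ∧ x i < 1) ∧ StrictMono x ∧
      ∀ i, a / (1 - x i) - b / x i = ∑ j ∈ univ.erase i, c / (x i - x j) := by
  obtain ⟨z, hz, hzmono, hmax⟩ := exists_strictMono_isLocalMax_stieltjesWeight n ha hb hc
  exact ⟨z, hz, hzmono,
    div_one_sub_sub_div_eq_sum_of_isLocalMax_stieltjesWeight hz hzmono.injective hmax⟩

theorem stmt_14 (n : ℕ) (hn : 1 ≤ n) (a b c : ℝ) (ha : 0 < a) (hb : 0 < b) (hc : 0 < c) :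
    ∃ x : Fin n → ℝ, (∀ i, 0 < x i ∧ x i < 1) ∧ StrictMono x ∧
      ∀ i, a / (1 - x i) - b / x i = ∑ j ∈ univ.erase i, c / (x i - x j) :=
  stmt_14_general n a b c ha hb hc
end

section
/- Let w₁,...,wₙ be distinct points of the upper half-plane with J(wᵢ) ∉ {0,1}, J'(wᵢ) ≠ 0, and J(wᵢ) ≠ J(wⱼ) for i ≠ j, and set f(τ) = η⁴(τ)/∏_{i=1}^n (J(τ)-J(wᵢ))². Then, assuming the identity 4η'/η - J''/J' = (1/6)(3J'/(1-J) - 4J'/J), the residue of f at wᵢ equals (hᵢ(wᵢ)/(6J'(wᵢ)))·(3/(1-J(wᵢ)) - 4/J(wᵢ) - ∑_{j≠i} 12/(J(wᵢ)-J(wⱼ))), where hᵢ(τ) = η⁴(τ)/∏_{j≠i}(J(τ)-J(wⱼ))². In particular, the residue of f at wᵢ vanishes if and only if 3/(1-J(wᵢ)) - 4/J(wᵢ) = ∑_{j≠i} 12/(J(wᵢ)-J(wⱼ)). -/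
/-!
Near `wᵢ` we have `f = hᵢ / (J - J wᵢ)²` and `J z - J wᵢ = (z - wᵢ) φ z` with `φ = dslope J wᵢ`
analytic, `φ wᵢ = J' wᵢ` and `2 φ' wᵢ = J'' wᵢ`. Hence `f = F / (z - wᵢ)²` with `F = hᵢ / φ²`
analytic, and the residue is `F' wᵢ = hᵢ'/J'² - hᵢ J''/J'³`. The logarithmic derivative
`hᵢ'/hᵢ = 4η'/η - ∑_{j ≠ i} 2J'/(J - J wⱼ)` together with the assumed identity for `4η'/η - J''/J'`
turns this into the stated closed form, which vanishes exactly when its last factor does because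
`hᵢ wᵢ ≠ 0`.
-/

open Complex Filter Finset Topology

section

variable {𝕜 : Type*} [NontriviallyNormedField 𝕜]

theorem analyticAt_dslope {E : Type*} [NormedAddCommGroup E] [NormedSpace 𝕜 E] {f : 𝕜 → E} {c : 𝕜}
    (hf : AnalyticAt 𝕜 f c) : AnalyticAt 𝕜 (dslope f c) c :=
  let ⟨p, hp⟩ := hf
  ⟨p.fslope, hp.has_fpower_series_dslope_fslope⟩

theorem AnalyticAt.two_mul_deriv_dslope_self [CompleteSpace 𝕜] {f : 𝕜 → 𝕜} {c : 𝕜}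
    (hf : AnalyticAt 𝕜 f c) :
    2 * deriv (dslope f c) c = deriv (deriv f) c := by
  obtain ⟨p, hp⟩ := hf
  obtain ⟨r, hr⟩ := id hp
  rw [hp.has_fpower_series_dslope_fslope.deriv,
    show p.fslope 1 (fun _ => 1) = p.fslope.coeff 1 from rfl, p.coeff_fslope, ← iteratedDeriv_one,
    ← iteratedDeriv_succ', iteratedDeriv_eq_iteratedFDeriv, ← hr.factorial_smul, nsmul_eq_mul,
    Nat.factorial_two, Nat.cast_two]
  rfl

theorem AnalyticAt.exists_div_sub_sq_eq {F : 𝕜 → 𝕜} {c : 𝕜} (hF : AnalyticAt 𝕜 F c) :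
    ∃ g : 𝕜 → 𝕜, AnalyticAt 𝕜 g c ∧ ∀ z ≠ c,
      F z / (z - c) ^ 2 = F c / (z - c) ^ 2 + deriv F c / (z - c) + g z := by
  refine ⟨dslope (dslope F c) c, analyticAt_dslope (analyticAt_dslope hF), fun z hz => ?_⟩
  have h1 := sub_smul_dslope F c z
  have h2 := sub_smul_dslope (dslope F c) c z
  rw [smul_eq_mul] at h1 h2
  rw [dslope_same] at h2
  have hzc : z - c ≠ 0 := sub_ne_zero.mpr hz
  field_simp
  linear_combination -h1 - (z - c) * h2

/-- The residue at `c` of `z ↦ h z / (J z - J c) ^ 2` when `deriv J c ≠ 0`. -/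
noncomputable def residueDivSubSq (h J : 𝕜 → 𝕜) (c : 𝕜) : 𝕜 :=
  deriv h c / deriv J c ^ 2 - h c * deriv (deriv J) c / deriv J c ^ 3

theorem deriv_div_dslope_sq [CompleteSpace 𝕜] {h J : 𝕜 → 𝕜} {c : 𝕜}
    (hh : DifferentiableAt 𝕜 h c) (hJ : AnalyticAt 𝕜 J c) (hJ' : deriv J c ≠ 0) :
    deriv (fun z => h z / dslope J c z ^ 2) c = residueDivSubSq h J c := by
  have hφ := (analyticAt_dslope hJ).differentiableAt.hasDerivAt
  have hφc : dslope J c c ^ 2 ≠ 0 := by rw [dslope_same]; exact pow_ne_zero 2 hJ'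
  rw [residueDivSubSq, (hh.hasDerivAt.fun_div (hφ.fun_pow 2) hφc).deriv, dslope_same,
    ← hJ.two_mul_deriv_dslope_self]
  field_simp
  ring

theorem AnalyticAt.exists_div_sq_sub_apply_eq [CompleteSpace 𝕜] {h J : 𝕜 → 𝕜} {c : 𝕜}
    (hh : AnalyticAt 𝕜 h c) (hJ : AnalyticAt 𝕜 J c) (hJ' : deriv J c ≠ 0) :
    ∃ g : 𝕜 → 𝕜, AnalyticAt 𝕜 g c ∧ ∀ z ≠ c,
      h z / (J z - J c) ^ 2 =
        h c / deriv J c ^ 2 / (z - c) ^ 2 + residueDivSubSq h J c / (z - c) + g z := by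
  have hφc : dslope J c c ^ 2 ≠ 0 := by rw [dslope_same]; exact pow_ne_zero 2 hJ'
  obtain ⟨g, hg, hF⟩ := (hh.fun_div ((analyticAt_dslope hJ).fun_pow 2) hφc).exists_div_sub_sq_eq
  refine ⟨g, hg, fun z hz => ?_⟩
  have hJz : J z - J c = (z - c) * dslope J c z := by rw [← smul_eq_mul, sub_smul_dslope]
  rw [hJz, mul_pow, mul_comm, ← div_div, hF z hz, deriv_div_dslope_sq hh.differentiableAt hJ hJ',
    dslope_same]

theorem logDeriv_prod_sub_pow {ι : Type*} {s : Finset ι} {J : 𝕜 → 𝕜} {a : ι → 𝕜} {x : 𝕜}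
    (n : ℕ) (hJ : DifferentiableAt 𝕜 J x) (ha : ∀ j ∈ s, J x ≠ a j) :
    logDeriv (fun z => ∏ j ∈ s, (J z - a j) ^ n) x = ∑ j ∈ s, n * deriv J x / (J x - a j) := by
  rw [logDeriv_prod (f := fun j z => (J z - a j) ^ n)
    (fun j hj => pow_ne_zero n (sub_ne_zero.mpr (ha j hj)))
    (fun j _ => (hJ.sub_const (a j)).fun_pow n)]
  refine sum_congr rfl fun j _ => ?_
  rw [logDeriv_fun_pow (hJ.sub_const (a j)), logDeriv_apply, deriv_sub_const, mul_div_assoc]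

theorem deriv_pow_div_prod_sub_pow {ι : Type*} {s : Finset ι} {η J : 𝕜 → 𝕜} {a : ι → 𝕜} {x : 𝕜}
    (m n : ℕ) (hη : DifferentiableAt 𝕜 η x) (hηx : η x ≠ 0) (hJ : DifferentiableAt 𝕜 J x)
    (ha : ∀ j ∈ s, J x ≠ a j) :
    deriv (fun z => η z ^ m / ∏ j ∈ s, (J z - a j) ^ n) x =
      η x ^ m / (∏ j ∈ s, (J x - a j) ^ n) *
        (m * deriv η x / η x - ∑ j ∈ s, n * deriv J x / (J x - a j)) := by
  have hP : ∏ j ∈ s, (J x - a j) ^ n ≠ 0 :=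
    prod_ne_zero_iff.mpr fun j hj => pow_ne_zero n (sub_ne_zero.mpr (ha j hj))
  have hPd : DifferentiableAt 𝕜 (fun z => ∏ j ∈ s, (J z - a j) ^ n) x :=
    .fun_finsetProd fun j _ => (hJ.sub_const (a j)).fun_pow n
  rw [← logDeriv_prod_sub_pow n hJ ha, mul_div_assoc, ← logDeriv_apply, ← logDeriv_fun_pow hη,
    ← logDeriv_div (f := fun z => η z ^ m) x (pow_ne_zero m hηx) hP (hη.fun_pow m) hPd,
    logDeriv_apply, mul_div_cancel₀ _ (div_ne_zero (pow_ne_zero m hηx) hP)]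

end

theorem residueDivSubSq_pow_four_div_prod {ι : Type*} {s : Finset ι} {η J : ℂ → ℂ} {a : ι → ℂ}
    {c : ℂ} (hη : DifferentiableAt ℂ η c) (hηc : η c ≠ 0) (hJ : DifferentiableAt ℂ J c)
    (hJ' : deriv J c ≠ 0) (hJ0 : J c ≠ 0) (hJ1 : J c ≠ 1) (ha : ∀ j ∈ s, J c ≠ a j)
    (hid : 4 * deriv η c / η c - deriv (deriv J) c / deriv J c =
      1 / 6 * (3 * deriv J c / (1 - J c) - 4 * deriv J c / J c)) :
    residueDivSubSq (fun z => η z ^ 4 / ∏ j ∈ s, (J z - a j) ^ 2) J c =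
      η c ^ 4 / (∏ j ∈ s, (J c - a j) ^ 2) / (6 * deriv J c) *
        (3 / (1 - J c) - 4 / J c - ∑ j ∈ s, 12 / (J c - a j)) := by
  have hsum : ∑ j ∈ s, ((2 : ℕ) : ℂ) * deriv J c / (J c - a j) =
      deriv J c / 6 * ∑ j ∈ s, 12 / (J c - a j) := by
    rw [mul_sum]
    exact sum_congr rfl fun j _ => by push_cast; ring
  have hlog : 4 * deriv η c / η c = deriv (deriv J) c / deriv J c +
      1 / 6 * (3 * deriv J c / (1 - J c) - 4 * deriv J c / J c) := by
    linear_combination hid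
  have hJ1' : 1 - J c ≠ 0 := sub_ne_zero.mpr hJ1.symm
  rw [residueDivSubSq, deriv_pow_div_prod_sub_pow 4 2 hη hηc hJ ha, hsum, Nat.cast_ofNat, hlog]
  field_simp
  ring

theorem stmt_19_general (Ω : Set ℂ) (hΩ : Ω = {z : ℂ | 0 < z.im})
    (η J : ℂ → ℂ) (hη : AnalyticOn ℂ η Ω) (hJ : AnalyticOn ℂ J Ω)
    (hηne : ∀ τ ∈ Ω, η τ ≠ 0)
    (n : ℕ) (w : Fin n → ℂ) (hw : ∀ i, w i ∈ Ω)
    (hJ0 : ∀ i, J (w i) ≠ 0) (hJ1 : ∀ i, J (w i) ≠ 1)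
    (hJ' : ∀ i, deriv J (w i) ≠ 0)
    (hJinj : ∀ i j, i ≠ j → J (w i) ≠ J (w j))
    -- the assumed logarithmic-derivative identity
    (hid : ∀ τ ∈ Ω,
      4 * deriv η τ / η τ - deriv (deriv J) τ / deriv J τ =
        1 / 6 * (3 * deriv J τ / (1 - J τ) - 4 * deriv J τ / J τ))
    (f : ℂ → ℂ)
    (hfdef : ∀ τ, f τ = η τ ^ 4 / ∏ i, (J τ - J (w i)) ^ 2)
    (h : Fin n → ℂ → ℂ)
    (hhdef : ∀ i τ, h i τ = η τ ^ 4 / ∏ j ∈ univ.erase i, (J τ - J (w j)) ^ 2) :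
    ∀ i : Fin n,
      (∃ g : ℂ → ℂ, AnalyticAt ℂ g (w i) ∧
        ∀ᶠ z in nhdsWithin (w i) {w i}ᶜ,
          f z =
            (h i (w i) / (deriv J (w i)) ^ 2) / (z - w i) ^ 2 +
            (h i (w i) / (6 * deriv J (w i)) *
              (3 / (1 - J (w i)) - 4 / J (w i)
                - ∑ j ∈ univ.erase i, 12 / (J (w i) - J (w j)))) / (z - w i)
            + g z) ∧
      (h i (w i) / (6 * deriv J (w i)) *
          (3 / (1 - J (w i)) - 4 / J (w i)
            - ∑ j ∈ univ.erase i, 12 / (J (w i) - J (w j))) = 0 ↔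
        3 / (1 - J (w i)) - 4 / J (w i)
          = ∑ j ∈ univ.erase i, 12 / (J (w i) - J (w j))) := by
  have hΩ_nhds : ∀ τ ∈ Ω, Ω ∈ 𝓝 τ :=
    fun τ hτ => (hΩ ▸ isOpen_lt continuous_const continuous_im : IsOpen Ω).mem_nhds hτ
  intro i
  have hJc : AnalyticAt ℂ J (w i) := hJ.analyticAt (hΩ_nhds _ (hw i))
  have hηc : AnalyticAt ℂ η (w i) := hη.analyticAt (hΩ_nhds _ (hw i))
  have hJw : ∀ j ∈ univ.erase i, J (w i) ≠ J (w j) :=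
    fun j hj => hJinj i j (ne_of_mem_erase hj).symm
  have hP : ∏ j ∈ univ.erase i, (J (w i) - J (w j)) ^ 2 ≠ 0 :=
    prod_ne_zero_iff.mpr fun j hj => pow_ne_zero 2 (sub_ne_zero.mpr (hJw j hj))
  have hh : h i = fun z => η z ^ 4 / ∏ j ∈ univ.erase i, (J z - J (w j)) ^ 2 := funext (hhdef i)
  have hhc : h i (w i) ≠ 0 := by
    rw [hh]
    exact div_ne_zero (pow_ne_zero 4 (hηne _ (hw i))) hP
  have hhA : AnalyticAt ℂ (h i) (w i) := by
    rw [hh]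
    exact (hηc.fun_pow 4).fun_div
      (Finset.analyticAt_fun_prod _ fun j _ => (hJc.sub analyticAt_const).fun_pow 2) hP
  have hf : ∀ z, f z = h i z / (J z - J (w i)) ^ 2 := fun z => by
    rw [hfdef, hhdef, ← mul_prod_erase univ _ (mem_univ i), div_div, mul_comm]
  have hres := residueDivSubSq_pow_four_div_prod hηc.differentiableAt (hηne _ (hw i))
    hJc.differentiableAt (hJ' i) (hJ0 i) (hJ1 i) hJw (hid _ (hw i))
  rw [← hh, ← hhdef] at hres
  obtain ⟨g, hg, hfg⟩ := hhA.exists_div_sq_sub_apply_eq hJc (hJ' i)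
  refine ⟨⟨g, hg, eventually_nhdsWithin_of_forall fun z hz => by rw [hf, hfg z hz, hres]⟩, ?_⟩
  rw [mul_eq_zero, sub_eq_zero, or_iff_right (div_ne_zero hhc (mul_ne_zero (by norm_num) (hJ' i)))]

theorem stmt_19 (Ω : Set ℂ) (hΩ : Ω = {z : ℂ | 0 < z.im})
    (η J : ℂ → ℂ) (hη : AnalyticOn ℂ η Ω) (hJ : AnalyticOn ℂ J Ω)
    (hηne : ∀ τ ∈ Ω, η τ ≠ 0)
    (n : ℕ) (w : Fin n → ℂ) (hw : ∀ i, w i ∈ Ω)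
    (hwdist : Function.Injective w)
    (hJ0 : ∀ i, J (w i) ≠ 0) (hJ1 : ∀ i, J (w i) ≠ 1)
    (hJ' : ∀ i, deriv J (w i) ≠ 0)
    (hJinj : ∀ i j, i ≠ j → J (w i) ≠ J (w j))
    -- the assumed logarithmic-derivative identity
    (hid : ∀ τ ∈ Ω,
      4 * deriv η τ / η τ - deriv (deriv J) τ / deriv J τ =
        1 / 6 * (3 * deriv J τ / (1 - J τ) - 4 * deriv J τ / J τ))
    (f : ℂ → ℂ)
    (hfdef : ∀ τ, f τ = η τ ^ 4 / ∏ i, (J τ - J (w i)) ^ 2)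
    (h : Fin n → ℂ → ℂ)
    (hhdef : ∀ i τ, h i τ = η τ ^ 4 / ∏ j ∈ univ.erase i, (J τ - J (w j)) ^ 2) :
    ∀ i : Fin n,
      (∃ g : ℂ → ℂ, AnalyticAt ℂ g (w i) ∧
        ∀ᶠ z in nhdsWithin (w i) {w i}ᶜ,
          f z =
            (h i (w i) / (deriv J (w i)) ^ 2) / (z - w i) ^ 2 +
            (h i (w i) / (6 * deriv J (w i)) *
              (3 / (1 - J (w i)) - 4 / J (w i)
                - ∑ j ∈ univ.erase i, 12 / (J (w i) - J (w j)))) / (z - w i)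
            + g z) ∧
      (h i (w i) / (6 * deriv J (w i)) *
          (3 / (1 - J (w i)) - 4 / J (w i)
            - ∑ j ∈ univ.erase i, 12 / (J (w i) - J (w j))) = 0 ↔
        3 / (1 - J (w i)) - 4 / J (w i)
          = ∑ j ∈ univ.erase i, 12 / (J (w i) - J (w j))) :=
  stmt_19_general Ω hΩ η J hη hJ hηne n w hw hJ0 hJ1 hJ' hJinj hid f hfdef h hhdef
end
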